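/- arXiv:1711.05295 — 2 statements merged into one kernel-verified Lean document; each statement's English description precedes it below -/
import Mathlib

section
/- Let T̃ be a finite rooted tree with root r, leaf set M, and κ: V(T̃) → ℝ satisfying normalisation ∑_{v≠r} κ_v² = 1, the children-sum recurrence at non-leaves, and the path-sum condition. Then for any leaf m ∈ M, κ_r · ∑_{u ∈ P(r,m), u ≠ r} κ_u = 1. -/
open Finset

/-- A finite rooted tree, given by its root, the children relation, the subtree
(vertex sets of subtrees rooted at each vertex), and root-to-descendant paths. -/
structure FinRootedTree (V : Type*) [Fintype V] [DecidableEq V] where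
  root : V
  children : V → Finset V
  subtree : V → Finset V
  path : V → V → Finset V
  mem_subtree_self : ∀ v, v ∈ subtree v
  subtree_eq : ∀ v, subtree v = insert v ((children v).biUnion subtree)
  childSubtree_disjoint : ∀ v, (children v : Set V).PairwiseDisjoint subtree
  not_mem_child_subtree : ∀ v c, c ∈ children v → v ∉ subtree c
  path_self : ∀ v, path v v = {v}
  path_step : ∀ v c u, c ∈ children v → u ∈ subtree c → path v u = insert v (path c u)
  path_subset : ∀ v u, u ∈ subtree v → path v u ⊆ subtree v
  root_subtree : subtree root = Finset.univ

variable {V : Type*} [Fintype V] [DecidableEq V]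

/-- The set of leaves of the subtree rooted at `v`. -/
def FinRootedTree.leaves (t : FinRootedTree V) (v : V) : Finset V :=
  (t.subtree v).filter fun u => t.children u = ∅

/-- The effective resistance of the subtree rooted at `v`, in terms of `κ`. -/
noncomputable def FinRootedTree.resistance (t : FinRootedTree V) (κ : V → ℝ) (v : V) : ℝ :=
  (∑ u ∈ t.subtree v, κ u ^ 2) / κ v ^ 2 - 1

lemma FinRootedTree.subtree_child_ssubset (t : FinRootedTree V) {v c : V}
    (hc : c ∈ t.children v) : t.subtree c ⊂ t.subtree v := by
  constructor
  · rw [t.subtree_eq v]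
    exact (Finset.subset_biUnion_of_mem t.subtree hc).trans (Finset.subset_insert _ _)
  · intro h
    exact t.not_mem_child_subtree v c hc (h (t.mem_subtree_self v))

lemma FinRootedTree.leaves_nonempty (t : FinRootedTree V) (v : V) :
    (t.leaves v).Nonempty := by
  suffices h : ∀ n (v : V), (t.subtree v).card = n → (t.leaves v).Nonempty from h _ v rfl
  intro n
  induction n using Nat.strong_induction_on with
  | _ n ih =>
    intro v hn
    by_cases hc : t.children v = ∅
    · exact ⟨v, Finset.mem_filter.2 ⟨t.mem_subtree_self v, hc⟩⟩
    · obtain ⟨c, hc'⟩ := Finset.nonempty_iff_ne_empty.2 hc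
      obtain ⟨m, hm⟩ := ih _ (hn ▸ Finset.card_lt_card (t.subtree_child_ssubset hc')) c rfl
      obtain ⟨hm1, hm2⟩ := Finset.mem_filter.1 hm
      exact ⟨m, Finset.mem_filter.2 ⟨(t.subtree_child_ssubset hc').1 hm1, hm2⟩⟩

lemma FinRootedTree.mem_path_self (t : FinRootedTree V) {v u : V}
    (hu : u ∈ t.subtree v) : v ∈ t.path v u := by
  rw [t.subtree_eq v, Finset.mem_insert] at hu
  rcases hu with rfl | hu
  · rw [t.path_self]; exact Finset.mem_singleton_self _
  · obtain ⟨c, hc, hu⟩ := Finset.mem_biUnion.1 hu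
    rw [t.path_step v c u hc hu]; exact Finset.mem_insert_self _ _

lemma kappa_key (t : FinRootedTree V) (κ : V → ℝ)
    (hrec : ∀ v, t.children v ≠ ∅ → κ v = ∑ c ∈ t.children v, κ c)
    (hpath : ∀ v, ∀ m₀ ∈ t.leaves v, ∀ m₁ ∈ t.leaves v,
      ∑ u ∈ t.path v m₀, κ u = ∑ u ∈ t.path v m₁, κ u)
    : ∀ v, ∀ m ∈ t.leaves v,
      κ v * ∑ u ∈ (t.path v m).erase v, κ u = ∑ u ∈ (t.subtree v).erase v, κ u ^ 2 := by
  suffices h : ∀ n (v : V), (t.subtree v).card = n → ∀ m ∈ t.leaves v,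
      κ v * ∑ u ∈ (t.path v m).erase v, κ u = ∑ u ∈ (t.subtree v).erase v, κ u ^ 2 from
    fun v => h _ v rfl
  intro n
  induction n using Nat.strong_induction_on with
  | _ n ih =>
    intro v hn m hm
    obtain ⟨hm1, hm2⟩ := Finset.mem_filter.1 hm
    by_cases hc : t.children v = ∅
    · have hsub : t.subtree v = {v} := by
        rw [t.subtree_eq v, hc]; simp
      have : m = v := by rw [hsub] at hm1; exact Finset.mem_singleton.1 hm1
      subst this
      rw [t.path_self, hsub]; simp
    · -- v is internal
      have hbi : (t.subtree v).erase v = (t.children v).biUnion t.subtree := by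
        rw [t.subtree_eq v, Finset.erase_insert]
        intro h
        obtain ⟨c, hc', hvc⟩ := Finset.mem_biUnion.1 h
        exact t.not_mem_child_subtree v c hc' hvc
      -- m lies in some child subtree
      have hm' : m ∈ (t.children v).biUnion t.subtree := by
        rw [← hbi]
        refine Finset.mem_erase.2 ⟨?_, hm1⟩
        intro h; subst h; exact hc hm2
      obtain ⟨c₀, hc₀, hmc₀⟩ := Finset.mem_biUnion.1 hm'
      -- the constant A = path sum from v into a child, minus κ v
      set A : ℝ := ∑ u ∈ t.path c₀ m, κ u with hA
      -- for every child c and leaf m' of c, the path sum from c equals A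
      have hAconst : ∀ c ∈ t.children v, ∀ m' ∈ t.leaves c,
          ∑ u ∈ t.path c m', κ u = A := by
        intro c hcv m' hm'c
        obtain ⟨hm'1, hm'2⟩ := Finset.mem_filter.1 hm'c
        have hleafv : m' ∈ t.leaves v :=
          Finset.mem_filter.2 ⟨(t.subtree_child_ssubset hcv).1 hm'1, hm'2⟩
        have h1 := hpath v m' hleafv m hm
        rw [t.path_step v c m' hcv hm'1, t.path_step v c₀ m hc₀ hmc₀] at h1
        have hv1 : v ∉ t.path c m' := fun h =>
          t.not_mem_child_subtree v c hcv (t.path_subset c m' hm'1 h)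
        have hv2 : v ∉ t.path c₀ m := fun h =>
          t.not_mem_child_subtree v c₀ hc₀ (t.path_subset c₀ m hmc₀ h)
        rw [Finset.sum_insert hv1, Finset.sum_insert hv2] at h1
        exact add_left_cancel h1
      -- rewrite LHS path sum
      have hv2 : v ∉ t.path c₀ m := fun h =>
        t.not_mem_child_subtree v c₀ hc₀ (t.path_subset c₀ m hmc₀ h)
      have hlhs : ∑ u ∈ (t.path v m).erase v, κ u = A := by
        rw [t.path_step v c₀ m hc₀ hmc₀, Finset.erase_insert hv2]
      -- each child's contribution
      have hchild : ∀ c ∈ t.children v,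
          κ c * A = ∑ u ∈ t.subtree c, κ u ^ 2 := by
        intro c hcv
        obtain ⟨m', hm'c⟩ := t.leaves_nonempty c
        have hlt : (t.subtree c).card < n :=
          hn ▸ Finset.card_lt_card (t.subtree_child_ssubset hcv)
        have hih := ih _ hlt c rfl m' hm'c
        have hm'1 := (Finset.mem_filter.1 hm'c).1
        have hcmem : c ∈ t.path c m' := t.mem_path_self hm'1
        have hsplit : ∑ u ∈ t.path c m', κ u
            = κ c + ∑ u ∈ (t.path c m').erase c, κ u :=
          (Finset.add_sum_erase _ _ hcmem).symm
        have hcsub : ∑ u ∈ t.subtree c, κ u ^ 2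
            = κ c ^ 2 + ∑ u ∈ (t.subtree c).erase c, κ u ^ 2 :=
          (Finset.add_sum_erase _ _ (t.mem_subtree_self c)).symm
        have := hAconst c hcv m' hm'c
        calc κ c * A = κ c * (κ c + ∑ u ∈ (t.path c m').erase c, κ u) := by
              rw [← this, hsplit]
          _ = κ c ^ 2 + κ c * ∑ u ∈ (t.path c m').erase c, κ u := by ring
          _ = κ c ^ 2 + ∑ u ∈ (t.subtree c).erase c, κ u ^ 2 := by rw [hih]
          _ = ∑ u ∈ t.subtree c, κ u ^ 2 := hcsub.symm
      rw [hlhs, hrec v hc, Finset.sum_mul, hbi,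
        Finset.sum_biUnion (t.childSubtree_disjoint v)]
      exact Finset.sum_congr rfl hchild

theorem kappa_root_identity (t : FinRootedTree V) (κ : V → ℝ)
    (hnorm : ∑ v ∈ Finset.univ.erase t.root, κ v ^ 2 = 1)
    (hrec : ∀ v, t.children v ≠ ∅ → κ v = ∑ c ∈ t.children v, κ c)
    (hpath : ∀ v, ∀ m₀ ∈ t.leaves v, ∀ m₁ ∈ t.leaves v,
      ∑ u ∈ t.path v m₀, κ u = ∑ u ∈ t.path v m₁, κ u)
    : ∀ m ∈ t.leaves t.root,
      κ t.root * ∑ u ∈ (t.path t.root m).erase t.root, κ u = 1 := by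
  intro m hm
  rw [kappa_key t κ hrec hpath t.root m hm, ← hnorm, t.root_subtree]
end

section
/- Let T̃ be a finite rooted tree of depth at most n with root r of degree d_r and k leaves, and let κ: V(T̃) → ℝ satisfy normalisation ∑_{v≠r} κ_v² = 1, the children-sum recurrence, the path-sum condition, and κ_v > 0 for all v. Define η̄ = 1/κ_r². Then max(1/k, 1/d_r) ≤ η̄ ≤ n. -/
open Finset

variable {V : Type*} [Fintype V] [DecidableEq V]

namespace FinRootedTree
variable (t : FinRootedTree V)

lemma subtree_child_subset {v c : V} (hc : c ∈ t.children v) : t.subtree c ⊆ t.subtree v := by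
  rw [t.subtree_eq v]
  exact fun u hu => Finset.mem_insert_of_mem (Finset.mem_biUnion.2 ⟨c, hc, hu⟩)

lemma card_subtree_child_lt {v c : V} (hc : c ∈ t.children v) :
    (t.subtree c).card < (t.subtree v).card :=
  Finset.card_lt_card ⟨t.subtree_child_subset hc,
    fun h => t.not_mem_child_subtree v c hc (h (t.mem_subtree_self v))⟩

lemma subtree_induction (P : V → Prop)
    (h : ∀ v, (∀ c ∈ t.children v, P c) → P v) : ∀ v, P v := by
  have key : ∀ N v, (t.subtree v).card ≤ N → P v := by
    intro N
    induction N with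
    | zero => exact fun v hv =>
        absurd (Finset.card_pos.2 ⟨v, t.mem_subtree_self v⟩) (by omega)
    | succ N ih =>
        intro v hv
        exact h v (fun c hc => ih c (by have := t.card_subtree_child_lt hc; omega))
  exact fun v => key _ v le_rfl

lemma kappa_mono (κ : V → ℝ) (hrec : ∀ v, t.children v ≠ ∅ → κ v = ∑ c ∈ t.children v, κ c)
    (hpos : ∀ v, 0 < κ v) : ∀ v, ∀ u ∈ t.subtree v, κ u ≤ κ v := by
  refine t.subtree_induction _ fun v ih u hu => ?_
  rw [t.subtree_eq v, Finset.mem_insert] at hu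
  rcases hu with rfl | hu
  · exact le_rfl
  · obtain ⟨c, hc, hu⟩ := Finset.mem_biUnion.1 hu
    have h1 : κ u ≤ κ c := ih c hc u hu
    have h2 : κ c ≤ κ v := by
      rw [hrec v (Finset.ne_empty_of_mem hc)]
      exact Finset.single_le_sum (fun i _ => (hpos i).le) hc
    linarith

lemma leaf_mem {v c m : V} (hc : c ∈ t.children v) (hm : m ∈ t.leaves c) : m ∈ t.leaves v := by
  simp only [leaves, Finset.mem_filter] at *
  exact ⟨t.subtree_child_subset hc hm.1, hm.2⟩

lemma leaves_nonempty_s5 : ∀ v, (t.leaves v).Nonempty := by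
  apply t.subtree_induction (fun v => (t.leaves v).Nonempty)
  intro v ih
  by_cases h : t.children v = ∅
  · exact ⟨v, Finset.mem_filter.2 ⟨t.mem_subtree_self v, h⟩⟩
  · obtain ⟨c, hc⟩ := Finset.nonempty_iff_ne_empty.2 h
    obtain ⟨m, hm⟩ := ih c hc
    exact ⟨m, t.leaf_mem hc hm⟩

lemma mem_path_self_s5 {v u : V} (hu : u ∈ t.subtree v) : v ∈ t.path v u := by
  rw [t.subtree_eq v, Finset.mem_insert] at hu
  rcases hu with rfl | hu
  · rw [t.path_self]; exact Finset.mem_singleton_self _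
  · obtain ⟨c, hc, hu⟩ := Finset.mem_biUnion.1 hu
    rw [t.path_step v c u hc hu]; exact Finset.mem_insert_self _ _

lemma sum_subtree (f : V → ℝ) (v : V) :
    ∑ u ∈ t.subtree v, f u = f v + ∑ c ∈ t.children v, ∑ u ∈ t.subtree c, f u := by
  have hnot : v ∉ (t.children v).biUnion t.subtree := by
    intro h
    obtain ⟨c, hc, hv⟩ := Finset.mem_biUnion.1 h
    exact t.not_mem_child_subtree v c hc hv
  rw [t.subtree_eq v, Finset.sum_insert hnot, Finset.sum_biUnion (t.childSubtree_disjoint v)]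

lemma sum_sq_eq (κ : V → ℝ)
    (hrec : ∀ v, t.children v ≠ ∅ → κ v = ∑ c ∈ t.children v, κ c)
    (hpath : ∀ v, ∀ m₀ ∈ t.leaves v, ∀ m₁ ∈ t.leaves v,
      ∑ u ∈ t.path v m₀, κ u = ∑ u ∈ t.path v m₁, κ u) :
    ∀ v, ∀ m ∈ t.leaves v, ∑ u ∈ t.subtree v, κ u ^ 2 = κ v * ∑ u ∈ t.path v m, κ u := by
  refine t.subtree_induction _ fun v ih m hm => ?_
  by_cases h : t.children v = ∅
  · have hsub : t.subtree v = {v} := by rw [t.subtree_eq v, h]; simp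
    have hmv : m = v := by
      have := (Finset.mem_filter.1 hm).1
      rw [hsub] at this; exact Finset.mem_singleton.1 this
    subst hmv
    rw [hsub, t.path_self]
    simp [sq]
  · rw [t.sum_subtree]
    have hsum : ∀ c ∈ t.children v, ∑ u ∈ t.subtree c, κ u ^ 2
        = κ c * (∑ u ∈ t.path v m, κ u - κ v) := by
      intro c hc
      obtain ⟨mc, hmc⟩ := t.leaves_nonempty_s5 c
      have hms : mc ∈ t.subtree c := (Finset.mem_filter.1 hmc).1
      have h1 := ih c hc mc hmc
      have hvnotin : v ∉ t.path c mc :=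
        fun hv => t.not_mem_child_subtree v c hc (t.path_subset c mc hms hv)
      have h3 : ∑ u ∈ t.path v mc, κ u = κ v + ∑ u ∈ t.path c mc, κ u := by
        rw [t.path_step v c mc hc hms, Finset.sum_insert hvnotin]
      have h4 : ∑ u ∈ t.path v m, κ u = ∑ u ∈ t.path v mc, κ u :=
        hpath v m hm mc (t.leaf_mem hc hmc)
      rw [h1]
      have h5 : ∑ u ∈ t.path c mc, κ u = ∑ u ∈ t.path v m, κ u - κ v := by
        rw [h4]; linarith
      rw [h5]
    rw [Finset.sum_congr rfl hsum, ← Finset.sum_mul, ← hrec v h]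
    ring

lemma kappa_eq_sum_leaves (κ : V → ℝ)
    (hrec : ∀ v, t.children v ≠ ∅ → κ v = ∑ c ∈ t.children v, κ c) :
    ∀ v, κ v = ∑ m ∈ t.leaves v, κ m := by
  apply t.subtree_induction (fun v => κ v = ∑ m ∈ t.leaves v, κ m)
  intro v ih
  by_cases h : t.children v = ∅
  · have hl : t.leaves v = {v} := by
      apply Finset.Subset.antisymm
      · intro u hu
        have := (Finset.mem_filter.1 hu).1
        rw [t.subtree_eq v, h] at this
        simpa using this
      · intro u hu
        rw [Finset.mem_singleton] at hu; subst hu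
        exact Finset.mem_filter.2 ⟨t.mem_subtree_self _, h⟩
    rw [hl, Finset.sum_singleton]
  · have hleaves : t.leaves v = (t.children v).biUnion t.leaves := by
      rw [leaves, t.subtree_eq v, Finset.filter_insert, if_neg h, Finset.filter_biUnion]
      rfl
    have hdisj : ((t.children v : Set V)).PairwiseDisjoint t.leaves :=
      (t.childSubtree_disjoint v).mono fun c => Finset.filter_subset _ _
    rw [hrec v h, hleaves, Finset.sum_biUnion hdisj]
    exact Finset.sum_congr rfl fun c hc => ih c hc

end FinRootedTree

theorem resistance_bounds (t : FinRootedTree V) (κ : V → ℝ) (n : ℕ)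
    (hnorm : ∑ v ∈ Finset.univ.erase t.root, κ v ^ 2 = 1)
    (hrec : ∀ v, t.children v ≠ ∅ → κ v = ∑ c ∈ t.children v, κ c)
    (hpath : ∀ v, ∀ m₀ ∈ t.leaves v, ∀ m₁ ∈ t.leaves v,
      ∑ u ∈ t.path v m₀, κ u = ∑ u ∈ t.path v m₁, κ u)
    (hpos : ∀ v, 0 < κ v)
    (hdepth : ∀ m ∈ t.leaves t.root, (t.path t.root m).card ≤ n + 1) :
    max (1 / ((t.leaves t.root).card : ℝ)) (1 / ((t.children t.root).card : ℝ))
        ≤ 1 / κ t.root ^ 2 ∧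
      1 / κ t.root ^ 2 ≤ (n : ℝ) := by
  set r := t.root with hrdef
  have hκr : 0 < κ r := hpos r
  have hκr2 : 0 < κ r ^ 2 := by positivity
  -- the root has children
  have hchild : t.children r ≠ ∅ := by
    intro h
    have huniv : (Finset.univ : Finset V) = {r} := by
      rw [← t.root_subtree, ← hrdef, t.subtree_eq, h]; simp
    rw [huniv, Finset.erase_singleton, Finset.sum_empty] at hnorm
    norm_num at hnorm
  -- total sum of squares
  have huniv_sum : ∑ v ∈ t.subtree r, κ v ^ 2 = 1 + κ r ^ 2 := by
    have hsub : t.subtree r = Finset.univ := t.root_subtree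
    rw [hsub, ← Finset.add_sum_erase _ _ (Finset.mem_univ r), hnorm]
    ring
  -- pick a leaf
  obtain ⟨m, hm⟩ := t.leaves_nonempty_s5 r
  have hmsub : m ∈ t.subtree r := (Finset.mem_filter.1 hm).1
  set P : ℝ := ∑ u ∈ t.path r m, κ u with hP
  have hkey : 1 + κ r ^ 2 = κ r * P := by
    rw [← huniv_sum]; exact t.sum_sq_eq κ hrec hpath r m hm
  -- upper bound
  have hub : 1 / κ r ^ 2 ≤ (n : ℝ) := by
    have hrpath : r ∈ t.path r m := t.mem_path_self_s5 hmsub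
    have herase : ∑ u ∈ (t.path r m).erase r, κ u = P - κ r := by
      have := Finset.add_sum_erase _ κ hrpath
      rw [← hP] at this; linarith
    have hcard : (((t.path r m).erase r).card : ℝ) ≤ (n : ℝ) := by
      have h1 : ((t.path r m).erase r).card = (t.path r m).card - 1 :=
        Finset.card_erase_of_mem hrpath
      have h2 := hdepth m hm
      have h3 : 0 < (t.path r m).card := Finset.card_pos.2 ⟨r, hrpath⟩
      exact_mod_cast by omega
    have hle : P - κ r ≤ (n : ℝ) * κ r := by
      rw [← herase]
      calc ∑ u ∈ (t.path r m).erase r, κ u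
          ≤ (((t.path r m).erase r).card : ℝ) * κ r := by
            rw [← nsmul_eq_mul]
            exact Finset.sum_le_card_nsmul _ _ _ fun u hu =>
              t.kappa_mono κ hrec hpos r u
                (t.path_subset r m hmsub (Finset.mem_of_mem_erase hu))
        _ ≤ (n : ℝ) * κ r := by
            exact mul_le_mul_of_nonneg_right hcard hκr.le
    rw [div_le_iff₀ hκr2]
    nlinarith
  refine ⟨max_le ?_ ?_, hub⟩
  -- 1/k bound
  · have hrnotleaf : r ∉ t.leaves r := fun h => hchild (Finset.mem_filter.1 h).2
    have hsubset : t.leaves r ⊆ Finset.univ.erase r := fun u hu =>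
      Finset.mem_erase.2 ⟨fun h => hrnotleaf (h ▸ hu), Finset.mem_univ u⟩
    have hsum_le : ∑ u ∈ t.leaves r, κ u ^ 2 ≤ 1 := by
      rw [← hnorm]
      exact Finset.sum_le_sum_of_subset_of_nonneg hsubset fun i _ _ => by positivity
    have hcs : κ r ^ 2 ≤ ((t.leaves r).card : ℝ) := by
      calc κ r ^ 2 = (∑ u ∈ t.leaves r, κ u) ^ 2 := by
            rw [← t.kappa_eq_sum_leaves κ hrec r]
        _ ≤ ((t.leaves r).card : ℝ) * ∑ u ∈ t.leaves r, κ u ^ 2 :=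
            sq_sum_le_card_mul_sum_sq
        _ ≤ ((t.leaves r).card : ℝ) * 1 := by
            exact mul_le_mul_of_nonneg_left hsum_le (by positivity)
        _ = _ := mul_one _
    exact one_div_le_one_div_of_le hκr2 hcs
  -- 1/d bound
  · have hsubset : t.children r ⊆ Finset.univ.erase r := fun c hc =>
      Finset.mem_erase.2 ⟨fun h => t.not_mem_child_subtree r c hc
        (h ▸ t.mem_subtree_self c), Finset.mem_univ c⟩
    have hsum_le : ∑ c ∈ t.children r, κ c ^ 2 ≤ 1 := by
      rw [← hnorm]
      exact Finset.sum_le_sum_of_subset_of_nonneg hsubset fun i _ _ => by positivity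
    have hcs : κ r ^ 2 ≤ ((t.children r).card : ℝ) := by
      calc κ r ^ 2 = (∑ c ∈ t.children r, κ c) ^ 2 := by rw [← hrec r hchild]
        _ ≤ ((t.children r).card : ℝ) * ∑ c ∈ t.children r, κ c ^ 2 :=
            sq_sum_le_card_mul_sum_sq
        _ ≤ ((t.children r).card : ℝ) * 1 := by
            exact mul_le_mul_of_nonneg_left hsum_le (by positivity)
        _ = _ := mul_one _
    exact one_div_le_one_div_of_le hκr2 hcs
end
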